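/- Define on V ⊕ V* the generalized metric R_G(u,ξ) = (G⁻¹ξ, Gu), where G is a nondegenerate symmetric bilinear form on V identified with the map V → V*. Let W ⊆ V be a subspace and F an alternating form on W, and define τ^F W = {(u,ξ) ∈ V ⊕ V* : u ∈ W and ξ|_W = F(u,·)}. Then R_G(τ^F W) = τ^F W if and only if (W,F) satisfies the topological bibrane condition: every pair (u,v) with u ∈ W, v ∈ V, G(v,·)|_W = F(u,·)|_W has v ∈ W and G(u,·)|_W = F(v,·)|_W. -/

import Mathlib

/-!
Since `R_G` is an involution, `R_G(τ^F W) = τ^F W` just says that `R_G` maps `τ^F W` into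
itself. Writing `ξ = G v`, a point of `τ^F W` is a pair `(u, G v)` with `u ∈ W` and
`G(v,·)|_W = F(u,·)`, and its image `(v, G u)` lies in `τ^F W` exactly when `v ∈ W` and
`G(u,·)|_W = F(v,·)`: this is the bibrane condition.
-/

open Module

/-- The `F`-rotated generalized tangent space
`τ^F W = {(u,ξ) : u ∈ W, ξ|_W = F(u,·)}`. -/
def tauF {V : Type*} [AddCommGroup V] [Module ℝ V]
    (W : Submodule ℝ V) (F : LinearMap.BilinForm ℝ W) :
    Set (V × Module.Dual ℝ V) :=
  {p | ∃ hu : p.1 ∈ W, ∀ (w : V) (hw : w ∈ W), p.2 w = F ⟨p.1, hu⟩ ⟨w, hw⟩}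

theorem Function.Involutive.image_eq_self_iff_mapsTo {α : Type*} {f : α → α}
    (hf : f.Involutive) {s : Set α} : f '' s = s ↔ Set.MapsTo f s s := by
  refine ⟨fun h => Set.mapsTo_iff_image_subset.2 h.subset, fun h => ?_⟩
  exact h.image_subset.antisymm fun x hx => ⟨f x, h hx, hf x⟩

section GeneralizedMetric

variable {V : Type*} [AddCommGroup V] [Module ℝ V]

/-- `R_G(u, ξ) = (G⁻¹ ξ, G u)`, with `G : V → V*` given as the equivalence `e`. -/
def generalizedMetric (e : V ≃ₗ[ℝ] Dual ℝ V) (p : V × Dual ℝ V) : V × Dual ℝ V :=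
  (e.symm p.2, e p.1)

theorem generalizedMetric_involutive (e : V ≃ₗ[ℝ] Dual ℝ V) :
    Function.Involutive (generalizedMetric e) := fun p => by
  simp [generalizedMetric]

theorem mk_mem_tauF_iff {W : Submodule ℝ V} {F : LinearMap.BilinForm ℝ W} {u : V}
    {ξ : Dual ℝ V} : (u, ξ) ∈ tauF W F ↔ ∃ hu : u ∈ W, ∀ w : W, ξ w = F ⟨u, hu⟩ w :=
  exists_congr fun _ => by simp only [Subtype.forall]

theorem mapsTo_generalizedMetric_tauF_iff (G : LinearMap.BilinForm ℝ V)
    (e : V ≃ₗ[ℝ] Dual ℝ V) (he : ∀ x y : V, e x y = G x y) (W : Submodule ℝ V)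
    (F : LinearMap.BilinForm ℝ W) :
    Set.MapsTo (generalizedMetric e) (tauF W F) (tauF W F) ↔
      ∀ (u : W) (v : V), (∀ w : W, G v (w : V) = F u w) →
        ∃ hv : v ∈ W, ∀ w : W, G (u : V) (w : V) = F ⟨v, hv⟩ w := by
  have mk_apply_mem : ∀ u v : V, (u, e v) ∈ tauF W F ↔
      ∃ hu : u ∈ W, ∀ w : W, G v (w : V) = F ⟨u, hu⟩ w := by
    intro u v
    simp only [mk_mem_tauF_iff, he]
  constructor
  · intro hmaps u v hv
    have := hmaps ((mk_apply_mem u v).2 ⟨u.2, hv⟩)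
    rwa [generalizedMetric, e.symm_apply_apply, mk_apply_mem] at this
  · rintro hcond ⟨u, ξ⟩ hp
    obtain ⟨v, rfl⟩ := e.surjective ξ
    obtain ⟨hu, hv⟩ := (mk_apply_mem u v).1 hp
    rw [generalizedMetric, e.symm_apply_apply, mk_apply_mem]
    exact hcond ⟨u, hu⟩ v hv

end GeneralizedMetric

theorem stmt15_general {V : Type*} [AddCommGroup V] [Module ℝ V]
    (G : LinearMap.BilinForm ℝ V)
    (e : V ≃ₗ[ℝ] Module.Dual ℝ V) (he : ∀ x y : V, e x y = G x y)
    (W : Submodule ℝ V) (F : LinearMap.BilinForm ℝ W) :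
    (fun p : V × Module.Dual ℝ V => (e.symm p.2, e p.1)) '' tauF W F = tauF W F ↔
      (∀ (u : W) (v : V), (∀ w : W, G v (w : V) = F u w) →
        ∃ hv : v ∈ W, ∀ w : W, G (u : V) (w : V) = F ⟨v, hv⟩ w) :=
  ((generalizedMetric_involutive e).image_eq_self_iff_mapsTo).trans
    (mapsTo_generalizedMetric_tauF_iff G e he W F)

/-- Proposition 6, fiberwise: the generalized metric
`R_G(u,ξ) = (G⁻¹ξ, Gu)` stabilizes `τ^F W` if and only if `(W,F)` satisfies
the topological bibrane condition. -/
theorem stmt15 {V : Type*} [AddCommGroup V] [Module ℝ V] [FiniteDimensional ℝ V]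
    (G : LinearMap.BilinForm ℝ V) (hGnd : G.Nondegenerate) (hGsymm : G.IsSymm)
    (e : V ≃ₗ[ℝ] Module.Dual ℝ V) (he : ∀ x y : V, e x y = G x y)
    (W : Submodule ℝ V) (F : LinearMap.BilinForm ℝ W) (hFalt : F.IsAlt) :
    (fun p : V × Module.Dual ℝ V => (e.symm p.2, e p.1)) '' tauF W F = tauF W F ↔
      (∀ (u : W) (v : V), (∀ w : W, G v (w : V) = F u w) →
        ∃ hv : v ∈ W, ∀ w : W, G (u : V) (w : V) = F ⟨v, hv⟩ w) :=
  stmt15_general G e he W F
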